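/- Let Γ be a preGarside trickle graph. Then the preGarside trickle monoid Tr⁺(Γ) is a preGarside monoid; consequently the trickle group Tr(Γ) is a preGarside group. -/

import Mathlib

open scoped Classical

universe u

namespace SimpleGraph

/-- `y` belongs to the star of `x` in `G` (i.e. `y = x` or `y` is a neighbour of `x`). -/
def InStar {V : Type u} (G : SimpleGraph V) (x y : V) : Prop := y = x ∨ G.Adj x y

end SimpleGraph

/-- A **trickle graph**: a simplicial graph together with a partial order on the vertices,
a vertex labeling `mu` with values in `ℕ≥2 ∪ {∞}`, and, for every vertex `x`, an automorphism
`phi x` of the star of `x` (encoded as a permutation of the whole vertex set fixing every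
vertex outside of the star of `x`), subject to conditions (a)–(g) of Bellingeri–Chemin–Paris. -/
structure TrickleGraph (V : Type u) [PartialOrder V] where
  /-- the underlying simplicial graph -/
  graph : SimpleGraph V
  /-- the vertex labeling, with `⊤` playing the role of `∞` -/
  mu : V → ℕ∞
  /-- the automorphism of the star of each vertex, extended by the identity -/
  phi : V → Equiv.Perm V
  two_le_mu : ∀ x : V, 2 ≤ mu x
  /-- condition (a) -/
  adj_of_lt : ∀ x y : V, x < y → graph.Adj x y
  /-- `phi x` is supported on the star of `x` -/
  phi_apply_of_not_inStar : ∀ x y : V, ¬ graph.InStar x y → phi x y = y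
  /-- `phi x` maps the star of `x` to itself -/
  inStar_phi : ∀ x y : V, graph.InStar x y → graph.InStar x (phi x y)
  /-- `phi x` is a graph automorphism of the (full subgraph spanned by the) star of `x` -/
  adj_phi_iff : ∀ x y z : V, graph.InStar x y → graph.InStar x z →
      (graph.Adj (phi x y) (phi x z) ↔ graph.Adj y z)
  /-- condition (b) -/
  adj_incomp : ∀ x y z : V, graph.Adj x y → ¬ x ≤ y → ¬ y ≤ x → z ≤ y →
      graph.Adj x z ∧ ¬ x ≤ z ∧ ¬ z ≤ x
  /-- condition (c) -/
  le_phi_iff : ∀ x y z : V, graph.InStar x y → graph.InStar x z →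
      (phi x z ≤ phi x y ↔ z ≤ y)
  /-- condition (d) -/
  lt_of_phi_ne : ∀ x y : V, graph.InStar x y → phi x y ≠ y → y < x
  /-- condition (e): if `mu x` is finite then the order of `phi x` divides `mu x` -/
  phi_pow_mu : ∀ x : V, phi x ^ WithTop.untopD 0 (mu x) = 1
  /-- condition (f) -/
  mu_phi : ∀ x y : V, graph.InStar x y → mu (phi x y) = mu y
  /-- condition (g) -/
  phi_phi : ∀ x y z : V, z < y → y < x →
      phi x (phi y z) = phi (phi x y) (phi x z)

namespace TrickleGraph

variable {V : Type u} [PartialOrder V]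

/-- The set of defining relators of the trickle group: `x ^ (mu x)` whenever `mu x ≠ ∞`, and
`phi_x(y) · x · (phi_y(x) · y)⁻¹` for every edge `{x, y}`. -/
def rels (T : TrickleGraph V) : Set (FreeGroup V) :=
  {r | ∃ (x : V) (n : ℕ), T.mu x = (n : ℕ∞) ∧ r = FreeGroup.of x ^ n} ∪
  {r | ∃ x y : V, T.graph.Adj x y ∧
      r = FreeGroup.of (T.phi x y) * FreeGroup.of x *
          (FreeGroup.of (T.phi y x) * FreeGroup.of y)⁻¹}

end TrickleGraph

/-- The **trickle group** of a trickle graph. -/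
abbrev TrickleGroup {V : Type u} [PartialOrder V] (T : TrickleGraph V) : Type u :=
  PresentedGroup T.rels

namespace TrickleGraph

variable {V : Type u} [PartialOrder V]

/-- The image of a vertex in the trickle group. -/
def gen (T : TrickleGraph V) (x : V) : TrickleGroup T := PresentedGroup.of x

/-- `mu` converted to a natural number, with `∞` mapped to `0` (so that `ZMod (T.muNat x)`
is the group `ℤ_{mu x}` of the paper, `ZMod 0 = ℤ` corresponding to `mu x = ∞`). -/
def muNat (T : TrickleGraph V) (x : V) : ℕ := WithTop.untopD 0 (T.mu x)

/-- The power `phi_x^a` for an exponent `a ∈ ℤ_{mu x}`; it is well defined on representatives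
by condition (e). -/
def phiPow (T : TrickleGraph V) (x : V) (a : ZMod (T.muNat x)) : Equiv.Perm V :=
  T.phi x ^ (ZMod.cast a : ℤ)

theorem mu_phi_apply (T : TrickleGraph V) (x y : V) : T.mu (T.phi x y) = T.mu y := by
  by_cases h : T.graph.InStar x y
  · exact T.mu_phi x y h
  · rw [T.phi_apply_of_not_inStar x y h]

theorem mu_phi_zpow (T : TrickleGraph V) (x : V) :
    ∀ (n : ℤ) (y : V), T.mu ((T.phi x ^ n) y) = T.mu y := by
  have hinv : ∀ y : V, T.mu ((T.phi x)⁻¹ y) = T.mu y := by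
    intro y
    conv_rhs => rw [← (T.phi x).apply_symm_apply y]
    exact (T.mu_phi_apply x ((T.phi x)⁻¹ y)).symm
  intro n
  induction n using Int.induction_on with
  | zero => intro y; simp
  | succ k ih =>
      intro y
      have h : (T.phi x ^ ((k : ℤ) + 1)) y = (T.phi x ^ (k : ℤ)) (T.phi x y) := by
        rw [zpow_add_one]; rfl
      rw [h, ih (T.phi x y), T.mu_phi_apply]
  | pred k ih =>
      intro y
      have h : (T.phi x ^ (-(k : ℤ) - 1)) y = (T.phi x ^ (-(k : ℤ))) ((T.phi x)⁻¹ y) := by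
        rw [zpow_sub_one]; rfl
      rw [h, ih ((T.phi x)⁻¹ y), hinv]

theorem mu_phiPow (T : TrickleGraph V) (x : V) (a : ZMod (T.muNat x)) (y : V) :
    T.mu ((T.phiPow x a) y) = T.mu y :=
  T.mu_phi_zpow x _ y

theorem muNat_phiPow (T : TrickleGraph V) (x : V) (a : ZMod (T.muNat x)) (y : V) :
    T.muNat ((T.phiPow x a) y) = T.muNat y :=
  congrArg (fun m : ℕ∞ => WithTop.untopD 0 m) (T.mu_phiPow x a y)

end TrickleGraph

/-- Transport of a `ZMod` element along an equality of moduli. -/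
def zmodCongr {m k : ℕ} (h : m = k) (a : ZMod m) : ZMod k := by subst h; exact a

theorem zmodCongr_ne_zero {m k : ℕ} (h : m = k) {a : ZMod m} (ha : a ≠ 0) :
    zmodCongr h a ≠ 0 := by subst h; exact ha

/-- A **syllable** `x^a`, where `x` is a vertex and `a ∈ ℤ_{mu x} \ {0}`. -/
def Syllable {V : Type u} [PartialOrder V] (T : TrickleGraph V) : Type u :=
  Σ x : V, {a : ZMod (T.muNat x) // a ≠ 0}

namespace Syllable

variable {V : Type u} [PartialOrder V] {T : TrickleGraph V}

/-- The element of the trickle group represented by a syllable. -/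
def elm (s : Syllable T) : TrickleGroup T :=
  (PresentedGroup.of s.1 : TrickleGroup T) ^ (ZMod.cast s.2.val : ℤ)

end Syllable

/-- Syllabic words. -/
abbrev SylWord {V : Type u} [PartialOrder V] (T : TrickleGraph V) := List (Syllable T)

/-- The element of the trickle group represented by a syllabic word. -/
def SylWord.eval {V : Type u} [PartialOrder V] {T : TrickleGraph V} (w : SylWord T) :
    TrickleGroup T :=
  (w.map Syllable.elm).prod

/-- The defining relations of the **preGarside trickle monoid** `Tr⁺(Γ)`:
`phi_x(y) · x = phi_y(x) · y` for every edge `{x, y}`. -/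
def TrickleGraph.monRels {V : Type u} [PartialOrder V] (T : TrickleGraph V) :
    FreeMonoid V → FreeMonoid V → Prop := fun u v =>
  ∃ x y : V, T.graph.Adj x y ∧
    u = FreeMonoid.of (T.phi x y) * FreeMonoid.of x ∧
    v = FreeMonoid.of (T.phi y x) * FreeMonoid.of y

/-- The **preGarside trickle monoid** `Tr⁺(Γ)` of a (preGarside) trickle graph. -/
abbrev TrickleMonoid {V : Type u} [PartialOrder V] (T : TrickleGraph V) : Type u :=
  PresentedMonoid T.monRels

section PreGarside

variable {M : Type*} [Monoid M]

/-- Left divisibility: `a ≤_L b` iff `a c = b` for some `c`. -/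
def DvdL (a b : M) : Prop := ∃ c, a * c = b

/-- Right divisibility: `a ≤_R b` iff `c a = b` for some `c`. -/
def DvdR (a b : M) : Prop := ∃ c, c * a = b

/-- `m` is the least common upper bound of `a` and `b` for left divisibility. -/
def IsLcmL (a b m : M) : Prop :=
  (DvdL a m ∧ DvdL b m) ∧ ∀ c, DvdL a c → DvdL b c → DvdL m c

/-- `m` is the least common upper bound of `a` and `b` for right divisibility. -/
def IsLcmR (a b m : M) : Prop :=
  (DvdR a m ∧ DvdR b m) ∧ ∀ c, DvdR a c → DvdR b c → DvdR m c

/-- A **preGarside monoid**: a cancellative atomic monoid in which any two elements admitting a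
common upper bound for left (resp. right) divisibility admit a least one. -/
def IsPreGarsideMonoid (M : Type*) [Monoid M] : Prop :=
  (∀ a b c d : M, c * a * d = c * b * d → a = b) ∧
  (∃ ν : M → ℕ, (∀ a : M, ν a = 0 ↔ a = 1) ∧ ∀ a b : M, ν a + ν b ≤ ν (a * b)) ∧
  (∀ a b : M, (∃ c, DvdL a c ∧ DvdL b c) → ∃ m, IsLcmL a b m) ∧
  (∀ a b : M, (∃ c, DvdR a c ∧ DvdR b c) → ∃ m, IsLcmR a b m)

/-- A **Garside element**: a balanced element whose set of divisors generates the monoid. -/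
def IsGarsideElement (Δ : M) : Prop :=
  {a : M | DvdL a Δ} = {a : M | DvdR a Δ} ∧ Submonoid.closure {a : M | DvdL a Δ} = ⊤

/-- A **Garside monoid**: a preGarside monoid containing a Garside element. -/
def IsGarsideMonoid (M : Type*) [Monoid M] : Prop :=
  IsPreGarsideMonoid M ∧ ∃ Δ : M, IsGarsideElement Δ

/-- A **special** submonoid: closed under taking factors. -/
def Submonoid.IsSpecial (N : Submonoid M) : Prop := ∀ a b : M, a * b ∈ N → a ∈ N ∧ b ∈ N

/-- A **parabolic submonoid** of a (preGarside) monoid: a special submonoid closed under the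
least common upper bounds `∨_L` and `∨_R` whenever they exist. -/
def Submonoid.IsParabolic (N : Submonoid M) : Prop :=
  N.IsSpecial ∧
  (∀ a b m : M, a ∈ N → b ∈ N → IsLcmL a b m → m ∈ N) ∧
  (∀ a b m : M, a ∈ N → b ∈ N → IsLcmR a b m → m ∈ N)

end PreGarside

/-- Relators defining the **enveloping group** of a monoid `M`: the enveloping group is
generated by the elements of `M` subject to the relations `of (a b) = of a · of b`. -/
def envRels (M : Type u) [Monoid M] : Set (FreeGroup M) :=
  {r | ∃ a b : M, r = FreeGroup.of (a * b) * (FreeGroup.of a * FreeGroup.of b)⁻¹}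

/-- The **enveloping group** `G(M)` of a monoid `M`. -/
abbrev EnvGroup (M : Type u) [Monoid M] : Type u := PresentedGroup (envRels M)

/-- The natural map `M → G(M)`. -/
def envOf (M : Type u) [Monoid M] (a : M) : EnvGroup M := PresentedGroup.of a

/-!
For adjacent `x ≠ y` the defining relation of `Tr⁺(Γ)` reads `x · θ_x(y) = y · θ_y(x)`, where
`θ_x(y) = φ_x⁻¹(y)` if `y < x` and `θ_x(y) = y` otherwise (`theta`). This complemented
presentation is studied by Dehornoy's right reversing, which rewrites `u⁻¹ v` by
`x⁻¹ y ↦ θ_x(y) θ_y(x)⁻¹` and `x⁻¹ x ↦ 1` into some `A B⁻¹`, so that `u A = v B`.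
Conditions (b), (c), (d) and (g) give the cube condition for `θ`, which makes reversing complete:
two words represent the same element iff reversing one against the other ends with empty words.
Completeness gives left cancellativity, and since reversing is deterministic, `u A` is then the
least common multiple of `u` and `v` for `≤_L` whenever they have a common multiple. Replacing
every `φ_x` by `φ_x⁻¹` gives a trickle graph whose monoid is opposite to `Tr⁺(Γ)`, which gives
the statements for `≤_R`. The relations preserve word length, which is the norm. When `μ ≡ ∞`,
`Tr(Γ)` is presented by the relations of `Tr⁺(Γ)`, so it is the enveloping group of `Tr⁺(Γ)`.
-/

section Opposite

variable {M N : Type*} [Monoid M] [Monoid N]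

theorem dvdR_iff_dvdL_unop (e : M ≃* Nᵐᵒᵖ) {a b : M} :
    DvdR a b ↔ DvdL (e a).unop (e b).unop := by
  constructor
  · rintro ⟨c, rfl⟩
    exact ⟨(e c).unop, by rw [map_mul, MulOpposite.unop_mul]⟩
  · rintro ⟨c, hc⟩
    refine ⟨e.symm (MulOpposite.op c), e.injective (MulOpposite.unop_injective ?_)⟩
    rw [map_mul, e.apply_symm_apply, MulOpposite.unop_mul, MulOpposite.unop_op, hc]

theorem exists_isLcmR_of_mulEquiv (e : M ≃* Nᵐᵒᵖ)
    (h : ∀ a b : N, (∃ c, DvdL a c ∧ DvdL b c) → ∃ m, IsLcmL a b m)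
    (a b : M) (hab : ∃ c, DvdR a c ∧ DvdR b c) : ∃ m, IsLcmR a b m := by
  simp only [dvdR_iff_dvdL_unop e] at hab
  obtain ⟨c, hc⟩ := hab
  obtain ⟨m, ⟨ham, hbm⟩, hmin⟩ := h _ _ ⟨_, hc⟩
  have he (n : N) : (e (e.symm (MulOpposite.op n))).unop = n := by simp
  refine ⟨e.symm (MulOpposite.op m), ⟨?_, ?_⟩, fun c hac hbc => ?_⟩ <;>
    simp only [dvdR_iff_dvdL_unop e, he] at *
  exacts [ham, hbm, hmin _ hac hbc]

end Opposite

section EnvGroup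

variable (M : Type u) [Monoid M]

theorem envOf_mul (a b : M) : envOf M (a * b) = envOf M a * envOf M b := by
  have h : PresentedGroup.mk (envRels M)
      (FreeGroup.of (a * b) * (FreeGroup.of a * FreeGroup.of b)⁻¹) = 1 :=
    (QuotientGroup.eq_one_iff _).2 (Subgroup.subset_normalClosure ⟨a, b, rfl⟩)
  rw [map_mul, map_inv, map_mul, mul_inv_eq_one] at h
  exact h

def envOfHom : M →* EnvGroup M := MonoidHom.mk' (envOf M) (envOf_mul M)

variable {M} {G : Type*} [Group G]

def EnvGroup.lift (f : M →* G) : EnvGroup M →* G :=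
  PresentedGroup.toGroup (f := f) (by rintro _ ⟨a, b, rfl⟩; simp)

theorem EnvGroup.lift_envOf (f : M →* G) (a : M) :
    EnvGroup.lift f (envOf M a) = f a :=
  PresentedGroup.toGroup.of _

end EnvGroup

namespace SimpleGraph

variable {V : Type u} {G : SimpleGraph V}

theorem inStar_self (G : SimpleGraph V) (x : V) : G.InStar x x := Or.inl rfl

theorem Adj.inStar {x y : V} (h : G.Adj x y) : G.InStar x y := Or.inr h

end SimpleGraph

namespace TrickleGraph

variable {V : Type u} [PartialOrder V] (T : TrickleGraph V)

section Phi

variable {x y z : V}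

theorem phi_eq_self_of_not_lt (h : ¬ y < x) : T.phi x y = y := by
  by_cases hy : T.graph.InStar x y
  · by_contra hne
    exact h (T.lt_of_phi_ne x y hy hne)
  · exact T.phi_apply_of_not_inStar x y hy

theorem phi_self (x : V) : T.phi x x = x := T.phi_eq_self_of_not_lt (lt_irrefl x)

theorem phi_symm_self (x : V) : (T.phi x).symm x = x := by
  rw [Equiv.symm_apply_eq, T.phi_self]

theorem inStar_phi_symm (hy : T.graph.InStar x y) : T.graph.InStar x ((T.phi x).symm y) := by
  by_contra h
  have hfix := T.phi_apply_of_not_inStar x _ h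
  rw [Equiv.apply_symm_apply] at hfix
  rw [← hfix] at h
  exact h hy

theorem le_phi_symm_iff (hy : T.graph.InStar x y) (hz : T.graph.InStar x z) :
    (T.phi x).symm z ≤ (T.phi x).symm y ↔ z ≤ y := by
  simpa using (T.le_phi_iff x _ _ (T.inStar_phi_symm hy) (T.inStar_phi_symm hz)).symm

theorem lt_phi_iff (hy : T.graph.InStar x y) (hz : T.graph.InStar x z) :
    T.phi x z < T.phi x y ↔ z < y := by
  rw [lt_iff_le_not_ge, lt_iff_le_not_ge, T.le_phi_iff x y z hy hz, T.le_phi_iff x z y hz hy]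

theorem lt_phi_symm_iff (hy : T.graph.InStar x y) (hz : T.graph.InStar x z) :
    (T.phi x).symm z < (T.phi x).symm y ↔ z < y := by
  rw [lt_iff_le_not_ge, lt_iff_le_not_ge, T.le_phi_symm_iff hy hz, T.le_phi_symm_iff hz hy]

theorem phi_lt_self_iff (hz : T.graph.InStar x z) : T.phi x z < x ↔ z < x := by
  simpa only [T.phi_self] using T.lt_phi_iff (T.graph.inStar_self x) hz

theorem phi_symm_lt_self_iff (hz : T.graph.InStar x z) : (T.phi x).symm z < x ↔ z < x := by
  simpa only [T.phi_symm_self] using T.lt_phi_symm_iff (T.graph.inStar_self x) hz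

theorem adj_phi_symm_iff (hy : T.graph.InStar x y) (hz : T.graph.InStar x z) :
    T.graph.Adj ((T.phi x).symm y) ((T.phi x).symm z) ↔ T.graph.Adj y z := by
  simpa using (T.adj_phi_iff x _ _ (T.inStar_phi_symm hy) (T.inStar_phi_symm hz)).symm

theorem adj_of_lt_of_not_lt {w y z : V} (hyz : T.graph.Adj y z) (hw : w < z) (hy : ¬ y < z) :
    T.graph.Adj w y := by
  by_cases hzy : z < y
  · exact T.adj_of_lt _ _ (hw.trans hzy)
  · exact (T.adj_incomp y z w hyz (fun h => hy (h.lt_of_ne hyz.ne))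
      (fun h => hzy (h.lt_of_ne hyz.ne.symm)) hw.le).1.symm

end Phi

section Theta

noncomputable def theta (x y : V) : V :=
  if y < x then (T.phi x).symm y else y

variable {x y z : V}

theorem theta_of_lt (h : y < x) : T.theta x y = (T.phi x).symm y := if_pos h

theorem theta_of_not_lt (h : ¬ y < x) : T.theta x y = y := if_neg h

theorem theta_injOn (hy : T.graph.InStar x y) (hz : T.graph.InStar x z)
    (h : T.theta x y = T.theta x z) : y = z := by
  unfold theta at h
  split_ifs at h with h1 h2 h2
  · exact (T.phi x).symm.injective h
  · exact absurd (h ▸ (T.phi_symm_lt_self_iff hy).2 h1) h2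
  · exact absurd (h ▸ (T.phi_symm_lt_self_iff hz).2 h2) h1
  · exact h

theorem adj_theta_theta (hxz : T.graph.Adj x z) (hyz : T.graph.Adj y z)
    (hxy : T.graph.Adj x y) : T.graph.Adj (T.theta z x) (T.theta z y) := by
  unfold theta
  split_ifs with h1 h2 h2
  · exact (T.adj_phi_symm_iff hxz.symm.inStar hyz.symm.inStar).2 hxy
  · exact T.adj_of_lt_of_not_lt hyz ((T.phi_symm_lt_self_iff hxz.symm.inStar).2 h1) h2
  · exact (T.adj_of_lt_of_not_lt hxz ((T.phi_symm_lt_self_iff hyz.symm.inStar).2 h2) h1).symm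
  · exact hxy

theorem adj_of_adj_theta_theta (hxz : T.graph.Adj x z) (hyz : T.graph.Adj y z)
    (h : T.graph.Adj (T.theta z x) (T.theta z y)) : T.graph.Adj x y := by
  unfold theta at h
  split_ifs at h with h1 h2 h2
  · exact (T.adj_phi_symm_iff hxz.symm.inStar hyz.symm.inStar).1 h
  · exact T.adj_of_lt_of_not_lt hyz h1 h2
  · exact (T.adj_of_lt_of_not_lt hxz h2 h1).symm
  · exact h

theorem cube_of_lt {a b c : V} (hab : T.graph.Adj a b) (hac : T.graph.Adj a c)
    (hbc : T.graph.Adj b c) (hba : b < a) :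
    T.theta (T.theta a b) (T.theta a c) = T.theta (T.theta b a) (T.theta b c) := by
  have hb' : (T.phi a).symm b < a := (T.phi_symm_lt_self_iff hab.inStar).2 hba
  rw [T.theta_of_lt hba, T.theta_of_not_lt hba.not_gt]
  by_cases hcb : c < b
  · have hca : c < a := hcb.trans hba
    have hc' : (T.phi b).symm c < a := ((T.phi_symm_lt_self_iff hbc.inStar).2 hcb).trans hba
    rw [T.theta_of_lt hca, T.theta_of_lt hcb,
      T.theta_of_lt ((T.lt_phi_symm_iff hab.inStar hac.inStar).2 hcb), T.theta_of_lt hc',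
      Equiv.symm_apply_eq, Equiv.symm_apply_eq, eq_comm]
    have hg := T.phi_phi a ((T.phi a).symm b) ((T.phi a).symm ((T.phi b).symm c))
      ((T.lt_phi_symm_iff hab.inStar (T.adj_of_lt _ _ hc').symm.inStar).2
        ((T.phi_symm_lt_self_iff hbc.inStar).2 hcb)) hb'
    simpa only [Equiv.apply_symm_apply] using hg
  · rw [T.theta_of_not_lt hcb]
    by_cases hca : c < a
    · rw [T.theta_of_lt hca,
        T.theta_of_not_lt ((T.lt_phi_symm_iff hab.inStar hac.inStar).not.2 hcb)]
    · rw [T.theta_of_not_lt hca, T.theta_of_not_lt fun h => hca (h.trans hb')]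

theorem cube_of_incomp {a b c : V} (hab : T.graph.Adj a b) (hbc : T.graph.Adj b c)
    (h1 : ¬ a ≤ b) (h2 : ¬ b ≤ a) :
    T.theta (T.theta a b) (T.theta a c) = T.theta (T.theta b a) (T.theta b c) := by
  rw [T.theta_of_not_lt fun h => h2 h.le, T.theta_of_not_lt fun h => h1 h.le]
  have not_lt_b {w : V} (hw : w < a) : ¬ w < b :=
    fun h => (T.adj_incomp b a w hab.symm h2 h1 hw.le).2.2 h.le
  have not_lt_a {w : V} (hw : w < b) : ¬ w < a :=
    fun h => (T.adj_incomp a b w hab h1 h2 hw.le).2.2 h.le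
  by_cases hca : c < a
  · have hc' := (T.phi_symm_lt_self_iff (T.adj_of_lt _ _ hca).symm.inStar).2 hca
    rw [T.theta_of_lt hca, T.theta_of_not_lt (not_lt_b hca), T.theta_of_not_lt (not_lt_b hc'),
      T.theta_of_lt hca]
  · rw [T.theta_of_not_lt hca]
    by_cases hcb : c < b
    · rw [T.theta_of_lt hcb,
        T.theta_of_not_lt (not_lt_a ((T.phi_symm_lt_self_iff hbc.inStar).2 hcb))]
    · rw [T.theta_of_not_lt hcb, T.theta_of_not_lt hca]

theorem cube {a b c : V} (hab : T.graph.Adj a b) (hac : T.graph.Adj a c)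
    (hbc : T.graph.Adj b c) :
    T.theta (T.theta a b) (T.theta a c) = T.theta (T.theta b a) (T.theta b c) := by
  by_cases hba : b < a
  · exact T.cube_of_lt hab hac hbc hba
  by_cases hab' : a < b
  · exact (T.cube_of_lt hab.symm hbc hac hab').symm
  · exact T.cube_of_incomp hab hbc (fun h => hab' (h.lt_of_ne hab.ne))
      (fun h => hba (h.lt_of_ne hab.ne.symm))

end Theta

section Reversing

/-- Right reversing of `x⁻¹ v`: `T.revLetter x v = some (A, r)` means `x⁻¹ v` reverses to
`A r⁻¹`, so that `x A = v r` in `Tr⁺(Γ)`; `none` records a clash of non-adjacent letters. -/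
noncomputable def revLetter : V → List V → Option (List V × List V)
  | x, [] => some ([], [x])
  | x, y :: v =>
    if x = y then some (v, [])
    else if T.graph.Adj x y then
      (revLetter (T.theta y x) v).map fun p => (T.theta x y :: p.1, p.2)
    else none

/-- Right reversing of `u⁻¹ v`: `T.rev u v = some (A, B)` means `u A = v B` in `Tr⁺(Γ)`. -/
noncomputable def rev : List V → List V → Option (List V × List V)
  | [], v => some (v, [])
  | x :: u, v => (T.revLetter x v).bind fun p => (rev u p.1).map fun q => (q.1, p.2 ++ q.2)

variable {x y : V}

@[simp] theorem revLetter_nil (x : V) : T.revLetter x [] = some ([], [x]) := rfl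

@[simp] theorem revLetter_cons_self (x : V) (v : List V) :
    T.revLetter x (x :: v) = some (v, []) := by
  rw [revLetter, if_pos rfl]

theorem revLetter_cons_of_adj (hxy : T.graph.Adj x y) (v : List V) :
    T.revLetter x (y :: v) =
      (T.revLetter (T.theta y x) v).map fun p => (T.theta x y :: p.1, p.2) := by
  rw [revLetter, if_neg hxy.ne, if_pos hxy]

theorem revLetter_cons_eq_some (hxy : x ≠ y) {v B r : List V} :
    T.revLetter x (y :: v) = some (B, r) ↔
      T.graph.Adj x y ∧
        ∃ A, T.revLetter (T.theta y x) v = some (A, r) ∧ B = T.theta x y :: A := by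
  rw [revLetter, if_neg hxy]
  split_ifs with hadj
  · simp only [Option.map_eq_some_iff, Prod.mk.injEq, Prod.exists, true_and, hadj]
    constructor
    · rintro ⟨A, r', h, rfl, rfl⟩
      exact ⟨A, h, rfl⟩
    · rintro ⟨A, h, rfl⟩
      exact ⟨A, r, h, rfl, rfl⟩
  · simp [hadj]

@[simp] theorem rev_nil (v : List V) : T.rev [] v = some (v, []) := rfl

theorem rev_cons (x : V) (u v : List V) :
    T.rev (x :: u) v =
      (T.revLetter x v).bind fun p => (T.rev u p.1).map fun q => (q.1, p.2 ++ q.2) := by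
  rw [rev]

@[simp] theorem rev_nil_right (u : List V) : T.rev u [] = some ([], u) := by
  induction u with
  | nil => rfl
  | cons x u ih => simp [rev_cons, ih]

@[simp] theorem rev_singleton (x : V) (v : List V) : T.rev [x] v = T.revLetter x v := by
  rw [rev_cons]
  cases T.revLetter x v <;> simp

theorem rev_append_left (u₁ u₂ v : List V) :
    T.rev (u₁ ++ u₂) v =
      (T.rev u₁ v).bind fun p => (T.rev u₂ p.1).map fun q => (q.1, p.2 ++ q.2) := by
  induction u₁ generalizing v with
  | nil => cases T.rev u₂ v <;> simp
  | cons x u₁ ih =>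
    simp only [List.cons_append, rev_cons, ih, Option.bind_assoc]
    congr 1; funext p
    cases T.rev u₁ p.1 <;> simp [Function.comp_def, List.append_assoc]

theorem revLetter_append (x : V) (v₁ v₂ : List V) :
    T.revLetter x (v₁ ++ v₂) =
      (T.revLetter x v₁).bind fun p => (T.rev p.2 v₂).map fun q => (p.1 ++ q.1, q.2) := by
  induction v₁ generalizing x with
  | nil => cases T.revLetter x v₂ <;> simp
  | cons y v₁ ih =>
    by_cases hxy : x = y
    · subst hxy
      simp
    by_cases hadj : T.graph.Adj x y
    · simp only [List.cons_append, revLetter_cons_of_adj T hadj, ih]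
      cases T.revLetter (T.theta y x) v₁ with
      | none => simp
      | some p => cases T.rev p.2 v₂ <;> simp [Function.comp_def]
    · simp [revLetter, hxy, hadj]

theorem rev_append_right (u v₁ v₂ : List V) :
    T.rev u (v₁ ++ v₂) =
      (T.rev u v₁).bind fun p => (T.rev p.2 v₂).map fun q => (p.1 ++ q.1, q.2) := by
  induction u generalizing v₁ v₂ with
  | nil => simp
  | cons x u ih =>
    rw [rev_cons, rev_cons, revLetter_append]
    cases T.revLetter x v₁ with
    | none => simp
    | some p =>
      obtain ⟨A₁, r₁⟩ := p
      cases h₂ : T.rev u A₁ with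
      | none => cases h₃ : T.rev r₁ v₂ <;> simp [ih, h₂, h₃]
      | some q =>
        obtain ⟨B, C₁⟩ := q
        cases h₃ : T.rev r₁ v₂ with
        | none => simp [h₂, rev_append_left, h₃]
        | some q' =>
          cases T.rev C₁ q'.1 <;> simp [ih, h₂, rev_append_left, h₃, Function.comp_def]

theorem rev_singleton_right (v : List V) (x : V) :
    T.rev v [x] = (T.revLetter x v).map fun p => (p.2, p.1) := by
  induction v generalizing x with
  | nil => simp
  | cons y v ih =>
    by_cases hyx : y = x
    · subst hyx
      simp [rev_cons]
    by_cases hadj : T.graph.Adj y x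
    · rw [rev_cons, revLetter_cons_of_adj T hadj, revLetter_nil, revLetter_cons_of_adj T hadj.symm]
      cases h : T.revLetter (T.theta y x) v <;> simp [ih, h]
    · have hadj' : ¬ T.graph.Adj x y := fun h => hadj h.symm
      simp [rev_cons, revLetter, hyx, Ne.symm hyx, hadj, hadj']

theorem rev_swap (u v : List V) : T.rev v u = (T.rev u v).map fun p => (p.2, p.1) := by
  induction u generalizing v with
  | nil => simp
  | cons x u ih =>
    rw [← List.singleton_append, rev_append_right, rev_append_left, rev_singleton_right,
      rev_singleton]
    cases T.revLetter x v with
    | none => simp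
    | some p => cases h : T.rev u p.1 <;> simp [ih, h]

end Reversing

section Monoid

noncomputable def ofList (w : List V) : TrickleMonoid T :=
  PresentedMonoid.mk T.monRels (FreeMonoid.ofList w)

theorem ofList_append (u v : List V) : T.ofList (u ++ v) = T.ofList u * T.ofList v := by
  rw [ofList, FreeMonoid.ofList_append, map_mul]; rfl

theorem ofList_nil : T.ofList [] = 1 := map_one _

theorem ofList_surjective : Function.Surjective T.ofList := fun a =>
  (PresentedMonoid.surjective_mk a).imp fun _ hw => hw

variable {x y : V}

theorem ofList_phi_of_lt (h : y < x) : T.ofList [T.phi x y, x] = T.ofList [x, y] :=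
  PresentedMonoid.mk_eq_mk_of_rel
    ⟨x, y, (T.adj_of_lt y x h).symm, rfl, by rw [T.phi_eq_self_of_not_lt h.not_gt]; rfl⟩

theorem ofList_comm_of_not_lt (hxy : T.graph.Adj x y) (h₁ : ¬ x < y) (h₂ : ¬ y < x) :
    T.ofList [y, x] = T.ofList [x, y] :=
  PresentedMonoid.mk_eq_mk_of_rel ⟨x, y, hxy, by rw [T.phi_eq_self_of_not_lt h₂]; rfl,
    by rw [T.phi_eq_self_of_not_lt h₁]; rfl⟩

theorem ofList_cell_of_lt (h : y < x) :
    T.ofList [x, T.theta x y] = T.ofList [y, T.theta y x] := by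
  have hlt := (T.phi_symm_lt_self_iff (T.adj_of_lt y x h).symm.inStar).2 h
  rw [T.theta_of_lt h, T.theta_of_not_lt h.not_gt, ← T.ofList_phi_of_lt hlt,
    Equiv.apply_symm_apply]

theorem ofList_cell (hxy : T.graph.Adj x y) :
    T.ofList [x, T.theta x y] = T.ofList [y, T.theta y x] := by
  by_cases h₁ : y < x
  · exact T.ofList_cell_of_lt h₁
  by_cases h₂ : x < y
  · exact (T.ofList_cell_of_lt h₂).symm
  · rw [T.theta_of_not_lt h₁, T.theta_of_not_lt h₂, T.ofList_comm_of_not_lt hxy h₂ h₁]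

noncomputable def lengthHom : TrickleMonoid T →* Multiplicative ℕ :=
  PresentedMonoid.lift (fun _ => Multiplicative.ofAdd 1) (by
    rintro _ _ ⟨x, y, -, rfl, rfl⟩
    simp)

theorem lengthHom_ofList (w : List V) :
    T.lengthHom (T.ofList w) = Multiplicative.ofAdd w.length := by
  induction w with
  | nil => rw [ofList_nil, map_one]; rfl
  | cons x w ih =>
    rw [← List.singleton_append, ofList_append, map_mul, ih, List.length_append, ofAdd_add]
    rfl

theorem length_eq_of_ofList_eq {u v : List V} (h : T.ofList u = T.ofList v) :
    u.length = v.length := by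
  simpa [lengthHom_ofList] using congrArg T.lengthHom h

theorem revLetter_sound {v A r : List V} (h : T.revLetter x v = some (A, r)) :
    T.ofList (x :: A) = T.ofList (v ++ r) := by
  induction v generalizing x A r with
  | nil =>
    obtain ⟨rfl, rfl⟩ : [] = A ∧ [x] = r := by simpa using h
    rfl
  | cons y v ih =>
    by_cases hxy : x = y
    · subst hxy
      obtain ⟨rfl, rfl⟩ : v = A ∧ [] = r := by simpa using h
      rw [List.append_nil]
    obtain ⟨hadj, A, hA, rfl⟩ := (T.revLetter_cons_eq_some hxy).1 h
    calc T.ofList (x :: T.theta x y :: A)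
        = T.ofList [x, T.theta x y] * T.ofList A := T.ofList_append [_, _] A
      _ = T.ofList [y] * T.ofList (T.theta y x :: A) := by
          rw [T.ofList_cell hadj, ← T.ofList_append]; rfl
      _ = T.ofList (y :: v ++ r) := by rw [ih hA, ← T.ofList_append]; rfl

theorem rev_sound {u v A B : List V} (h : T.rev u v = some (A, B)) :
    T.ofList (u ++ A) = T.ofList (v ++ B) := by
  induction u generalizing v A B with
  | nil =>
    obtain ⟨rfl, rfl⟩ : v = A ∧ [] = B := by simpa using h
    simp
  | cons x u ih =>
    simp only [rev_cons, Option.bind_eq_some_iff, Option.map_eq_some_iff, Prod.mk.injEq] at h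
    obtain ⟨⟨A₁, r₁⟩, h₁, ⟨A₂, B₂⟩, h₂, rfl, rfl⟩ := h
    calc T.ofList (x :: u ++ A₂)
        = T.ofList [x] * T.ofList (u ++ A₂) := by rw [← T.ofList_append]; rfl
      _ = T.ofList (x :: A₁) * T.ofList B₂ := by
          rw [ih h₂, T.ofList_append, ← mul_assoc, ← T.ofList_append]; rfl
      _ = T.ofList (v ++ (r₁ ++ B₂)) := by
          rw [T.revLetter_sound h₁, ← T.ofList_append, List.append_assoc]

end Monoid

section RevEq

def RevEq (u v : List V) : Prop := T.rev u v = some ([], [])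

variable {T} {x y z : V} {s t u v : List V}

theorem revEq_cons_cons_iff : T.RevEq (x :: u) (x :: v) ↔ T.RevEq u v := by
  unfold RevEq
  rw [rev_cons, revLetter_cons_self, Option.bind_some]
  cases T.rev u v <;> simp

theorem revEq_refl (u : List V) : T.RevEq u u := by
  induction u with
  | nil => rfl
  | cons x u ih => exact revEq_cons_cons_iff.2 ih

theorem RevEq.symm (h : T.RevEq u v) : T.RevEq v u := by
  rw [RevEq, rev_swap, h]; rfl

theorem RevEq.ofList_eq (h : T.RevEq u v) : T.ofList u = T.ofList v := by
  simpa using T.rev_sound h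

theorem RevEq.length_eq (h : T.RevEq u v) : u.length = v.length :=
  T.length_eq_of_ofList_eq h.ofList_eq

theorem RevEq.append {u' v' : List V} (h : T.RevEq u v) (h' : T.RevEq u' v') :
    T.RevEq (u ++ u') (v ++ v') := by
  unfold RevEq at *
  simp [rev_append_left, rev_append_right, h, h']

theorem revEq_nil_left_iff : T.RevEq [] v ↔ v = [] := by
  simp [RevEq]

theorem revEq_cons_iff :
    T.RevEq (x :: u) v ↔ ∃ A, T.revLetter x v = some (A, []) ∧ T.RevEq u A := by
  simp only [RevEq, rev_cons, Option.bind_eq_some_iff, Option.map_eq_some_iff, Prod.mk.injEq,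
    List.append_eq_nil_iff, Prod.exists]
  constructor
  · rintro ⟨A, r, hA, B, C, hBC, rfl, rfl, rfl⟩
    exact ⟨A, hA, hBC⟩
  · rintro ⟨A, hA, hu⟩
    exact ⟨A, [], hA, [], [], hu, rfl, rfl, rfl⟩

theorem revEq_cell (hxy : T.graph.Adj x y) : T.RevEq [x, T.theta x y] [y, T.theta y x] := by
  simp [RevEq, rev_cons, revLetter_cons_of_adj T hxy]

theorem RevEq.exists_of_cons_cons (hyz : y ≠ z) (h : T.RevEq (y :: s) (z :: t)) :
    T.graph.Adj y z ∧ ∃ P Q, T.revLetter (T.theta y z) s = some (P, []) ∧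
      T.revLetter (T.theta z y) t = some (Q, []) ∧
      T.RevEq s (T.theta y z :: Q) ∧ T.RevEq t (T.theta z y :: P) := by
  obtain ⟨_, hy, hs⟩ := revEq_cons_iff.1 h
  obtain ⟨_, hz, ht⟩ := revEq_cons_iff.1 h.symm
  obtain ⟨hadj, Q, hQ, rfl⟩ := (T.revLetter_cons_eq_some hyz).1 hy
  obtain ⟨-, P, hP, rfl⟩ := (T.revLetter_cons_eq_some hyz.symm).1 hz
  exact ⟨hadj, P, Q, hP, hQ, hs, ht⟩

end RevEq

section Completeness

open Relation

/-- Dehornoy's invariant: `RevEq` implies it (by induction on length, using the cube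
condition), and it makes `RevEq` transitive. -/
def RevLetterCompat (s t : List V) : Prop :=
  ∀ ⦃x : V⦄ ⦃A r : List V⦄, T.revLetter x s = some (A, r) →
    ∃ A', T.revLetter x t = some (A', r) ∧ ReflTransGen T.RevEq A A'

variable {T} {x y z : V} {s t A r : List V}

instance : Std.Symm T.RevEq := ⟨fun _ _ h => h.symm⟩

theorem RevLetterCompat.refl (s : List V) : T.RevLetterCompat s s :=
  fun _ A _ hA => ⟨A, hA, .refl⟩

theorem reflTransGen_revEq_cons (x : V) {u v : List V} (h : ReflTransGen T.RevEq u v) :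
    ReflTransGen T.RevEq (x :: u) (x :: v) :=
  h.lift (x :: ·) fun _ _ h => revEq_cons_cons_iff.2 h

theorem revLetterCompat_of_reflTransGen {n : ℕ}
    (H : ∀ s t : List V, s.length ≤ n → T.RevEq s t → T.RevLetterCompat s t)
    (hs : s.length ≤ n) (h : ReflTransGen T.RevEq s t) : T.RevLetterCompat s t := by
  induction h using ReflTransGen.head_induction_on with
  | refl => exact .refl _
  | head h₁ _ ih =>
    intro x A r hA
    obtain ⟨A₁, hA₁, h₁₂⟩ := H _ _ hs h₁ hA
    obtain ⟨A₂, hA₂, h₂₃⟩ := ih (h₁.length_eq ▸ hs) hA₁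
    exact ⟨A₂, hA₂, h₁₂.trans h₂₃⟩

/-- The face at `x` of the cube on the pairwise adjacent letters `x`, `y`, `z`. -/
theorem reflTransGen_revEq_face (hxy : T.graph.Adj x y) (hxz : T.graph.Adj x z)
    (hyz : T.graph.Adj y z) {A B : List V} (h : ReflTransGen T.RevEq A B) :
    ReflTransGen T.RevEq (T.theta x y :: T.theta (T.theta y x) (T.theta y z) :: A)
      (T.theta x z :: T.theta (T.theta z x) (T.theta z y) :: B) := by
  rw [T.cube hxy.symm hyz hxz, T.cube hxz.symm hyz.symm hxy]
  exact .head ((revEq_cell (T.adj_theta_theta hxy.symm hxz.symm hyz)).append (revEq_refl A))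
    (reflTransGen_revEq_cons _ (reflTransGen_revEq_cons _ h))

theorem exists_revLetter_of_revEq_cons_cons {n : ℕ}
    (H : ∀ s t : List V, s.length ≤ n → T.RevEq s t → T.RevLetterCompat s t)
    (hlen : s.length ≤ n) (hxy : T.graph.Adj x y) (hxz : x ≠ z) (hyz : y ≠ z)
    (heq : T.RevEq (y :: s) (z :: t)) (hA : T.revLetter (T.theta y x) s = some (A, r)) :
    ∃ A', T.revLetter x (z :: t) = some (A', r) ∧
      ReflTransGen T.RevEq (T.theta x y :: A) A' := by
  -- Reverse `x` through `y :: s ≈ θ_y(z) :: Q`, cross the cube face at `x`, and come back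
  -- through `θ_z(y) :: P ≈ t`; every word used is shorter than `y :: s`.
  obtain ⟨hyz', P, Q, hP, hQ, hsQ, htP⟩ := heq.exists_of_cons_cons hyz
  have hlenQ : Q.length ≤ n := by
    have := hsQ.length_eq; simp only [List.length_cons] at this; omega
  have hlenP : (T.theta z y :: P).length ≤ n := by
    have := heq.length_eq; have := htP.length_eq; simp only [List.length_cons] at *; omega
  have hne : T.theta y x ≠ T.theta y z :=
    fun h => hxz (T.theta_injOn hxy.symm.inStar hyz'.inStar h)
  obtain ⟨_, hA₁, hAA₁⟩ := H s _ hlen hsQ hA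
  obtain ⟨hadj, A₂, hA₂, rfl⟩ := (T.revLetter_cons_eq_some hne).1 hA₁
  have hxz' : T.graph.Adj x z := T.adj_of_adj_theta_theta hxy hyz'.symm hadj
  obtain ⟨_, hP', hPQ⟩ := H s _ hlen hsQ hP
  simp only [revLetter_cons_self, Option.some.injEq, Prod.mk.injEq] at hP'
  obtain ⟨rfl, -⟩ := hP'
  rw [T.cube hyz' hxy.symm hxz'.symm] at hA₂
  obtain ⟨B, hB, hA₂B⟩ := revLetterCompat_of_reflTransGen H hlenQ (symm hPQ) hA₂
  have hB' : T.revLetter (T.theta z x) (T.theta z y :: P) =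
      some (T.theta (T.theta z x) (T.theta z y) :: B, r) := by
    rw [revLetter_cons_of_adj T (T.adj_theta_theta hxz' hyz' hxy), hB]; rfl
  obtain ⟨A₃, hA₃, hBA₃⟩ := H _ t hlenP htP.symm hB'
  refine ⟨T.theta x z :: A₃, by rw [revLetter_cons_of_adj T hxz', hA₃]; rfl, ?_⟩
  exact (reflTransGen_revEq_cons _ hAA₁).trans <|
    (reflTransGen_revEq_face hxy hxz' hyz' hA₂B).trans (reflTransGen_revEq_cons _ hBA₃)

theorem revLetterCompat_cons {n : ℕ}
    (H : ∀ s t : List V, s.length ≤ n → T.RevEq s t → T.RevLetterCompat s t)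
    (hlen : s.length ≤ n) (h : T.RevEq (y :: s) t) : T.RevLetterCompat (y :: s) t := by
  intro x A r hA
  obtain ⟨Ay, hAy, hsAy⟩ := revEq_cons_iff.1 h
  by_cases hxy : x = y
  · subst hxy
    obtain ⟨rfl, rfl⟩ : s = A ∧ [] = r := by simpa using hA
    exact ⟨Ay, hAy, .single hsAy⟩
  obtain ⟨hadj, A₁, hA₁, rfl⟩ := (T.revLetter_cons_eq_some hxy).1 hA
  obtain _ | ⟨z, t⟩ := t
  · exact absurd h.length_eq (by simp)
  by_cases hxz : x = z
  · subst hxz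
    obtain ⟨Az, hAz, htAz⟩ := revEq_cons_iff.1 h.symm
    obtain ⟨rfl, rfl⟩ := Prod.mk.inj (Option.some_inj.1 (hA.symm.trans hAz))
    exact ⟨t, revLetter_cons_self _ _ _, .single htAz.symm⟩
  by_cases hyz : y = z
  · subst hyz
    obtain ⟨A', hA', hAA'⟩ := H s t hlen (revEq_cons_cons_iff.1 h) hA₁
    exact ⟨T.theta x y :: A', by rw [revLetter_cons_of_adj T hadj, hA']; rfl,
      reflTransGen_revEq_cons _ hAA'⟩
  exact exists_revLetter_of_revEq_cons_cons H hlen hadj hxz hyz h hA₁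

theorem revLetterCompat_of_length_le (n : ℕ) :
    ∀ s t : List V, s.length ≤ n → T.RevEq s t → T.RevLetterCompat s t := by
  induction n with
  | zero =>
    intro s t hs h
    obtain rfl := List.length_eq_zero_iff.1 (Nat.le_zero.1 hs)
    exact revEq_nil_left_iff.1 h ▸ .refl _
  | succ n H =>
    rintro (_ | ⟨y, s⟩) t hs h
    · exact revEq_nil_left_iff.1 h ▸ .refl _
    · exact revLetterCompat_cons H (Nat.le_of_succ_le_succ hs) h

theorem RevEq.revLetterCompat (h : T.RevEq s t) : T.RevLetterCompat s t :=
  revLetterCompat_of_length_le _ s t le_rfl h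

theorem RevEq.trans {u : List V} (h₁ : T.RevEq s t) (h₂ : T.RevEq t u) : T.RevEq s u := by
  induction s generalizing t u with
  | nil => rwa [revEq_nil_left_iff.1 h₁] at h₂
  | cons y s ih =>
    obtain ⟨A, hA, hsA⟩ := revEq_cons_iff.1 h₁
    obtain ⟨A', hA', hAA'⟩ := h₂.revLetterCompat hA
    have hsA' : T.RevEq s A' := by
      clear hA'
      induction hAA' with
      | refl => exact hsA
      | tail _ hbc hsb => exact ih hsb hbc
    exact revEq_cons_iff.2 ⟨A', hA', hsA'⟩

end Completeness

section Consequences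

theorem revEq_of_monRels {a b : FreeMonoid V} (h : T.monRels a b) :
    T.RevEq a.toList b.toList := by
  obtain ⟨x, y, hadj, rfl, rfl⟩ := h
  show T.RevEq [T.phi x y, x] [T.phi y x, y]
  have revEq_phi_of_lt {x y : V} (h : y < x) : T.RevEq [T.phi x y, x] [x, y] := by
    have hlt := (T.phi_lt_self_iff (T.adj_of_lt y x h).symm.inStar).2 h
    simpa [T.theta_of_not_lt hlt.not_gt, T.theta_of_lt hlt] using
      revEq_cell (T.adj_of_lt _ _ hlt)
  by_cases h₁ : y < x
  · rw [T.phi_eq_self_of_not_lt h₁.not_gt]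
    exact revEq_phi_of_lt h₁
  by_cases h₂ : x < y
  · rw [T.phi_eq_self_of_not_lt h₂.not_gt]
    exact (revEq_phi_of_lt h₂).symm
  · simpa [T.phi_eq_self_of_not_lt, T.theta_of_not_lt, h₁, h₂] using revEq_cell hadj.symm

noncomputable def revCon : Con (FreeMonoid V) where
  r a b := T.RevEq a.toList b.toList
  iseqv := ⟨fun _ => revEq_refl _, RevEq.symm, RevEq.trans⟩
  mul' h h' := h.append h'

theorem ofList_eq_iff {u v : List V} : T.ofList u = T.ofList v ↔ T.RevEq u v :=
  ⟨fun h => (Con.conGen_le (c := T.revCon)).2 (fun _ _ => T.revEq_of_monRels)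
    (PresentedMonoid.mk_eq_mk_iff.1 h),
    RevEq.ofList_eq⟩

theorem revEq_append_left_iff {w u v : List V} : T.RevEq (w ++ u) (w ++ v) ↔ T.RevEq u v := by
  induction w with
  | nil => rfl
  | cons x w ih => exact revEq_cons_cons_iff.trans ih

instance : IsLeftCancelMul (TrickleMonoid T) where
  mul_left_cancel a b c h := by
    obtain ⟨w, rfl⟩ := T.ofList_surjective a
    obtain ⟨u, rfl⟩ := T.ofList_surjective b
    obtain ⟨v, rfl⟩ := T.ofList_surjective c
    simpa only [← ofList_append, ofList_eq_iff, revEq_append_left_iff] using h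

theorem exists_rev_of_mul_eq {u v : List V} {c d : TrickleMonoid T}
    (h : T.ofList u * c = T.ofList v * d) :
    ∃ A B, T.rev u v = some (A, B) ∧ DvdL (T.ofList A) c := by
  obtain ⟨p, rfl⟩ := T.ofList_surjective c
  obtain ⟨q, rfl⟩ := T.ofList_surjective d
  rw [← ofList_append, ← ofList_append, ofList_eq_iff, RevEq, rev_append_left] at h
  simp only [Option.bind_eq_some_iff, Option.map_eq_some_iff, Prod.mk.injEq] at h
  obtain ⟨⟨A₁, B₁⟩, h₁, ⟨_, C⟩, hp, rfl, hC⟩ := h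
  obtain rfl : C = [] := (List.append_eq_nil_iff.1 hC).2
  rw [rev_append_right] at h₁
  simp only [Option.bind_eq_some_iff, Option.map_eq_some_iff, Prod.mk.injEq] at h₁
  obtain ⟨⟨A, B⟩, hAB, ⟨C', D⟩, -, rfl, -⟩ := h₁
  exact ⟨A, B, hAB, T.ofList C', by rw [← ofList_append, T.ofList_eq_iff.2 hp]⟩

theorem exists_isLcmL (a b : TrickleMonoid T) (h : ∃ c, DvdL a c ∧ DvdL b c) :
    ∃ m, IsLcmL a b m := by
  obtain ⟨u, rfl⟩ := T.ofList_surjective a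
  obtain ⟨v, rfl⟩ := T.ofList_surjective b
  obtain ⟨c, ⟨d₁, hd₁⟩, d₂, hd₂⟩ := h
  obtain ⟨A, B, hAB, -⟩ := T.exists_rev_of_mul_eq (hd₁.trans hd₂.symm)
  refine ⟨T.ofList (u ++ A), ⟨⟨_, (T.ofList_append u A).symm⟩, T.ofList B, ?_⟩, ?_⟩
  · rw [← ofList_append, T.rev_sound hAB]
  · rintro _ ⟨d₁, rfl⟩ ⟨d₂, hd₂⟩
    obtain ⟨A', B', hAB', e, he⟩ := T.exists_rev_of_mul_eq hd₂.symm
    obtain ⟨rfl, -⟩ := Prod.mk.inj (Option.some_inj.1 (hAB.symm.trans hAB'))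
    exact ⟨e, by rw [ofList_append, mul_assoc, he]⟩

theorem exists_norm : ∃ ν : TrickleMonoid T → ℕ,
    (∀ a, ν a = 0 ↔ a = 1) ∧ ∀ a b, ν a + ν b ≤ ν (a * b) := by
  refine ⟨fun a => (T.lengthHom a).toAdd, fun a => ⟨fun h => ?_, fun h => by simp [h]⟩,
    fun a b => by simp⟩
  obtain ⟨w, rfl⟩ := T.ofList_surjective a
  simp only [lengthHom_ofList, toAdd_ofAdd, List.length_eq_zero_iff] at h
  rw [h, ofList_nil]

end Consequences

section Op

noncomputable def op : TrickleGraph V where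
  graph := T.graph
  mu := T.mu
  phi x := (T.phi x).symm
  two_le_mu := T.two_le_mu
  adj_of_lt := T.adj_of_lt
  phi_apply_of_not_inStar x y h := by rw [Equiv.symm_apply_eq, T.phi_apply_of_not_inStar x y h]
  inStar_phi _ _ := T.inStar_phi_symm
  adj_phi_iff _ _ _ := T.adj_phi_symm_iff
  adj_incomp := T.adj_incomp
  le_phi_iff _ _ _ := T.le_phi_symm_iff
  lt_of_phi_ne x y hy h := T.lt_of_phi_ne x y hy fun he => h (by rw [Equiv.symm_apply_eq, he])
  phi_pow_mu x := by rw [← Equiv.Perm.inv_def, inv_pow, T.phi_pow_mu, inv_one]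
  mu_phi x y hy := by simpa using (T.mu_phi x _ (T.inStar_phi_symm hy)).symm
  phi_phi x y z hz hy := by
    have hxy := (T.adj_of_lt y x hy).symm.inStar
    have hy' := (T.phi_symm_lt_self_iff hxy).2 hy
    have hz' := (T.lt_phi_symm_iff hxy (T.adj_of_lt z x (hz.trans hy)).symm.inStar).2 hz
    have hw := (T.phi_symm_lt_self_iff (T.adj_of_lt _ _ hz').symm.inStar).2 hz'
    have hg := T.phi_phi x _ _ hw hy'
    simp only [Equiv.apply_symm_apply] at hg
    rw [Equiv.symm_apply_eq, Equiv.symm_apply_eq, ← hg]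

variable {x y : V}

theorem op_ofList_phi (hxy : T.graph.Adj x y) :
    T.op.ofList [x, T.phi x y] = T.op.ofList [y, T.phi y x] := by
  have of_lt {x y : V} (h : y < x) : T.op.ofList [x, T.phi x y] = T.op.ofList [y, x] := by
    simpa [op] using (T.op.ofList_phi_of_lt ((T.phi_lt_self_iff
      (T.adj_of_lt y x h).symm.inStar).2 h)).symm
  by_cases h₁ : y < x
  · rw [T.phi_eq_self_of_not_lt h₁.not_gt, of_lt h₁]
  by_cases h₂ : x < y
  · rw [T.phi_eq_self_of_not_lt h₂.not_gt, of_lt h₂]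
  · rw [T.phi_eq_self_of_not_lt h₁, T.phi_eq_self_of_not_lt h₂]
    exact (T.op.ofList_comm_of_not_lt hxy h₂ h₁).symm

noncomputable def toOpHom : TrickleMonoid T →* (TrickleMonoid T.op)ᵐᵒᵖ :=
  PresentedMonoid.lift (fun x => MulOpposite.op (T.op.ofList [x])) (by
    rintro _ _ ⟨x, y, hxy, rfl, rfl⟩
    simp only [map_mul, FreeMonoid.lift_eval_of, ← MulOpposite.op_mul, ← ofList_append]
    exact congrArg MulOpposite.op (T.op_ofList_phi hxy))

theorem toOpHom_ofList (w : List V) :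
    T.toOpHom (T.ofList w) = MulOpposite.op (T.op.ofList w.reverse) := by
  induction w with
  | nil => simp [ofList_nil]
  | cons x w ih =>
    rw [← List.singleton_append, ofList_append, map_mul, ih, List.reverse_append,
      ofList_append, MulOpposite.op_mul]
    rfl

theorem unop_toOpHom_unop_toOpHom (a : TrickleMonoid T) :
    (T.op.toOpHom (T.toOpHom a).unop).unop = a := by
  obtain ⟨w, rfl⟩ := T.ofList_surjective a
  rw [toOpHom_ofList, MulOpposite.unop_op, toOpHom_ofList, List.reverse_reverse]
  rfl

noncomputable def opEquiv : TrickleMonoid T ≃* (TrickleMonoid T.op)ᵐᵒᵖ where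
  toFun := T.toOpHom
  invFun a := (T.op.toOpHom a.unop).unop
  left_inv := T.unop_toOpHom_unop_toOpHom
  right_inv a := MulOpposite.unop_injective (T.op.unop_toOpHom_unop_toOpHom a.unop)
  map_mul' := map_mul _

instance : IsRightCancelMul (TrickleMonoid T) :=
  T.opEquiv.injective.isRightCancelMul _ (map_mul _)

theorem exists_isLcmR (a b : TrickleMonoid T) (h : ∃ c, DvdR a c ∧ DvdR b c) :
    ∃ m, IsLcmR a b m :=
  exists_isLcmR_of_mulEquiv T.opEquiv T.op.exists_isLcmL a b h

end Op

section Group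

theorem gen_phi_mul_gen {x y : V} (hxy : T.graph.Adj x y) :
    T.gen (T.phi x y) * T.gen x = T.gen (T.phi y x) * T.gen y := by
  have h : PresentedGroup.mk T.rels (FreeGroup.of (T.phi x y) * FreeGroup.of x *
      (FreeGroup.of (T.phi y x) * FreeGroup.of y)⁻¹) = 1 :=
    (QuotientGroup.eq_one_iff _).2 (Subgroup.subset_normalClosure (Or.inr ⟨x, y, hxy, rfl⟩))
  rw [map_mul, map_inv, map_mul, map_mul, mul_inv_eq_one] at h
  exact h

noncomputable def toTrickleGroup : TrickleMonoid T →* TrickleGroup T :=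
  PresentedMonoid.lift T.gen (by
    rintro _ _ ⟨x, y, hxy, rfl, rfl⟩
    simpa using T.gen_phi_mul_gen hxy)

noncomputable def trickleGroupToEnvGroup (hmu : ∀ x : V, T.mu x = ⊤) :
    TrickleGroup T →* EnvGroup (TrickleMonoid T) :=
  PresentedGroup.toGroup (f := fun x => envOf _ (PresentedMonoid.of T.monRels x)) (by
    rintro _ (⟨x, n, hn, rfl⟩ | ⟨x, y, hxy, rfl⟩)
    · exact absurd (hmu x ▸ hn) (ENat.top_ne_natCast n)
    · simp only [map_mul, map_inv, FreeGroup.lift_apply_of, mul_inv_eq_one, ← envOf_mul]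
      exact congrArg _ (PresentedMonoid.mk_eq_mk_of_rel ⟨x, y, hxy, rfl, rfl⟩))

noncomputable def trickleGroupEquiv (hmu : ∀ x : V, T.mu x = ⊤) :
    TrickleGroup T ≃* EnvGroup (TrickleMonoid T) :=
  MonoidHom.toMulEquiv (T.trickleGroupToEnvGroup hmu) (EnvGroup.lift T.toTrickleGroup)
    (PresentedGroup.ext fun _ => rfl)
    (PresentedGroup.ext fun a => by
      change T.trickleGroupToEnvGroup hmu (EnvGroup.lift T.toTrickleGroup (envOf _ a)) =
        envOfHom _ a
      rw [EnvGroup.lift_envOf]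
      exact DFunLike.congr_fun (PresentedMonoid.ext _ (φ := (T.trickleGroupToEnvGroup hmu).comp
        T.toTrickleGroup) (ψ := envOfHom _) fun _ => rfl) a)

end Group

end TrickleGraph

/-- **Theorem 2.14.** For a preGarside trickle graph `Γ` (i.e. `mu x = ∞` for every vertex),
the preGarside trickle monoid `Tr⁺(Γ)` is a preGarside monoid; consequently the trickle group
`Tr(Γ)` is a preGarside group, being (isomorphic to) the enveloping group of the preGarside
monoid `Tr⁺(Γ)`. -/
theorem TrickleMonoid.isPreGarside {V : Type u} [PartialOrder V] (T : TrickleGraph V)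
    (hmu : ∀ x : V, T.mu x = ⊤) :
    IsPreGarsideMonoid (TrickleMonoid T) ∧
      Nonempty (TrickleGroup T ≃* EnvGroup (TrickleMonoid T)) :=
  ⟨⟨fun _ _ _ _ h => mul_left_cancel (mul_right_cancel h), T.exists_norm, T.exists_isLcmL,
    T.exists_isLcmR⟩, ⟨T.trickleGroupEquiv hmu⟩⟩
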